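/- arXiv:1403.3855 — 3 statements merged into one kernel-verified Lean document; each statement's English description precedes it below -/
import Mathlib

section
/- Let (V,≤) be a finite partially ordered set and let (V,E) be any finite directed acyclic graph whose transitive closure induces the partial order ≤ (for instance the Hasse diagram of ≤). For any two probability measures μ₁, μ₂ on V the following three statements are equivalent: (1) μ₂ stochastically dominates μ₁, i.e. μ₁ ⪯ μ₂; (2) there exists a coupling ρ of μ₁ and μ₂ compatible with ≤; (3) there exists a flow Q on (V,E) such that div Q = μ₁ − μ₂. -/
open scoped BigOperators

variable {V : Type*}

/-- A directed path in the digraph `(V, E)`: a nonempty list of vertices whose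
consecutive pairs are directed edges. -/
def IsDipath (E : Set (V × V)) (l : List V) : Prop :=
  l ≠ [] ∧ l.Chain' (fun a b => (a, b) ∈ E)

/-- The list of directed edges of a path. -/
def pathEdges (l : List V) : List (V × V) := l.zip l.tail

/-- The unit flow `Q_γ` along a path: `1` on the edges of the path and `0` elsewhere. -/
noncomputable def pathFlow (l : List V) : V × V → ℝ :=
  Set.indicator {e | e ∈ pathEdges l} 1

/-- A flow on the digraph `(V, E)`: nonnegative and supported on `E`. -/
def IsFlow (E : Set (V × V)) (Q : V × V → ℝ) : Prop :=
  (∀ e, 0 ≤ Q e) ∧ ∀ e, e ∉ E → Q e = 0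

/-- The divergence of a flow at a vertex. -/
noncomputable def divergence (Q : V × V → ℝ) (x : V) : ℝ :=
  (∑' y, Q (x, y)) - ∑' y, Q (y, x)

/-- A relation is acyclic if it has no directed cycles. -/
def AcyclicRel (r : V → V → Prop) : Prop := ∀ x, ¬ Relation.TransGen r x x

/-- The edge relation of a digraph. -/
def edgeRel (E : Set (V × V)) : V → V → Prop := fun a b => (a, b) ∈ E

/-- The partial order induced by an acyclic digraph: `x ≤ y` iff `x = y` or there is
a directed path from `x` to `y`. -/
def inducedLE (E : Set (V × V)) : V → V → Prop :=
  Relation.ReflTransGen (edgeRel E)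

/-- A finitely decomposable flow: a pointwise sum `∑ₙ qₙ Q_{γₙ}` over finite
self-avoiding directed paths with summable nonnegative weights. -/
def FinDecomposable (E : Set (V × V)) (Q : V × V → ℝ) : Prop :=
  ∃ (γ : ℕ → List V) (q : ℕ → ℝ),
    (∀ n, IsDipath E (γ n)) ∧ (∀ n, (γ n).Nodup) ∧ (∀ n, 0 ≤ q n) ∧ Summable q ∧
    ∀ e, Q e = ∑' n, q n * pathFlow (γ n) e

/-- A probability measure on a countable set, as a nonnegative function of total sum `1`. -/
def IsProb (μ : V → ℝ) : Prop := (∀ x, 0 ≤ μ x) ∧ HasSum μ 1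

/-- A coupling of `μ₁` and `μ₂`: a probability on `V × V` with the given marginals. -/
def IsCoupling (μ₁ μ₂ : V → ℝ) (ρ : V × V → ℝ) : Prop :=
  (∀ p, 0 ≤ ρ p) ∧ (∀ x, HasSum (fun y => ρ (x, y)) (μ₁ x)) ∧
    ∀ y, HasSum (fun x => ρ (x, y)) (μ₂ y)

/-- Stochastic domination: `∑ f μ₁ ≤ ∑ f μ₂` for every bounded increasing `f`. -/
def StochDom (le : V → V → Prop) (μ₁ μ₂ : V → ℝ) : Prop :=
  ∀ f : V → ℝ, (∃ C, ∀ x, |f x| ≤ C) → (∀ x y, le x y → f x ≤ f y) →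
    ∑' x, f x * μ₁ x ≤ ∑' x, f x * μ₂ x

/-- Finite-case divergence. -/
noncomputable def divergenceF [Fintype V] (Q : V × V → ℝ) (x : V) : ℝ :=
  (∑ y, Q (x, y)) - ∑ y, Q (y, x)

/-- Probability measure on a finite set. -/
def IsProbF [Fintype V] (μ : V → ℝ) : Prop := (∀ x, 0 ≤ μ x) ∧ ∑ x, μ x = 1

/-- Coupling on a finite set. -/
def IsCouplingF [Fintype V] (μ₁ μ₂ : V → ℝ) (ρ : V × V → ℝ) : Prop :=
  (∀ p, 0 ≤ ρ p) ∧ (∀ x, ∑ y, ρ (x, y) = μ₁ x) ∧ ∀ y, ∑ x, ρ (x, y) = μ₂ y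

/-- Stochastic domination on a finite set. -/
def StochDomF [Fintype V] (le : V → V → Prop) (μ₁ μ₂ : V → ℝ) : Prop :=
  ∀ f : V → ℝ, (∀ x y, le x y → f x ≤ f y) → ∑ x, f x * μ₁ x ≤ ∑ x, f x * μ₂ x

/-- The cost of a path: the sum of the weights of its edges. -/
noncomputable def pathCost (w : V × V → ℝ) (l : List V) : ℝ := ((pathEdges l).map w).sum

/-- The geodesic cost associated to a weight function on a digraph. -/
noncomputable def geoCost (E : Set (V × V)) (w : V × V → ℝ) (x y : V) : ℝ :=
  sInf {r | ∃ l, IsDipath E l ∧ l.head? = some x ∧ l.getLast? = some y ∧ pathCost w l = r}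

/-!
(3) ⇒ (1) is summation by parts: `∑ f (μ₁ - μ₂) = ∑ f · div Q = ∑_{(x,y)} (f x - f y) Q(x,y) ≤ 0`
for increasing `f`. (2) ⇒ (3): the divergences of flows form a convex cone containing
`δ_x - δ_y` for every edge, hence for every `x ≤ y`, and `μ₁ - μ₂ = ∑ ρ(x,y) (δ_x - δ_y)`.
(1) ⇒ (2): if `(μ₁, μ₂)` is not a marginal pair of a probability on `{x ≤ y}`, Hahn–Banach
separates it from that compact convex set, giving potentials `f, g` with
`⟨f, μ₁⟩ + ⟨g, μ₂⟩ < u < f x + g y` for all `x ≤ y`. Replacing `g` by its largest increasing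
minorant `G` gives `f ≥ u - G`, and then `μ₁ ⪯ μ₂` tested against `G` forces
`⟨f, μ₁⟩ + ⟨g, μ₂⟩ ≥ u`.
-/

section Flows

variable [Fintype V]

lemma divergenceF_add (Q R : V × V → ℝ) :
    divergenceF (Q + R) = divergenceF Q + divergenceF R := by
  ext x
  simp only [divergenceF, Pi.add_apply, Finset.sum_add_distrib]
  ring

lemma divergenceF_smul (c : ℝ) (Q : V × V → ℝ) : divergenceF (c • Q) = c • divergenceF Q := by
  ext x
  simp [divergenceF, Finset.mul_sum, mul_sub]

lemma divergenceF_single [DecidableEq V] (a b : V) :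
    divergenceF (Pi.single (a, b) 1) = (Pi.single a 1 - Pi.single b 1 : V → ℝ) := by
  ext x
  rcases eq_or_ne x a with rfl | ha <;> rcases eq_or_ne x b with rfl | hb <;>
    simp [divergenceF, Pi.single_apply, Prod.ext_iff, *]

lemma sum_mul_divergenceF (f : V → ℝ) (Q : V × V → ℝ) :
    ∑ x, f x * divergenceF Q x = ∑ p : V × V, (f p.1 - f p.2) * Q p := by
  simp only [divergenceF, mul_sub, Finset.mul_sum, sub_mul, Finset.sum_sub_distrib,
    Fintype.sum_prod_type]
  rw [Finset.sum_comm (f := fun x y => f x * Q (y, x))]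

def HasFlowDivergence (E : Set (V × V)) (d : V → ℝ) : Prop :=
  ∃ Q, IsFlow E Q ∧ divergenceF Q = d

lemma stochDomF_of_hasFlowDivergence {E : Set (V × V)} {μ₁ μ₂ : V → ℝ}
    (h : HasFlowDivergence E (μ₁ - μ₂)) : StochDomF (inducedLE E) μ₁ μ₂ := by
  obtain ⟨Q, hQ, hdiv⟩ := h
  intro f hf
  have hparts : ∑ x, f x * μ₁ x - ∑ x, f x * μ₂ x = ∑ p : V × V, (f p.1 - f p.2) * Q p := by
    rw [← sum_mul_divergenceF, hdiv, ← Finset.sum_sub_distrib]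
    simp [mul_sub]
  have hterm : ∀ p : V × V, (f p.1 - f p.2) * Q p ≤ 0 := by
    intro p
    by_cases hp : p ∈ E
    · exact mul_nonpos_of_nonpos_of_nonneg
        (sub_nonpos.2 (hf _ _ (Relation.ReflTransGen.single hp))) (hQ.1 p)
    · simp [hQ.2 p hp]
  rw [← sub_nonpos, hparts]
  exact Finset.sum_nonpos fun p _ => hterm p

variable {E : Set (V × V)}

lemma hasFlowDivergence_zero : HasFlowDivergence E 0 :=
  ⟨0, ⟨fun _ => le_rfl, fun _ _ => rfl⟩, by ext x; simp [divergenceF]⟩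

lemma HasFlowDivergence.add {d d' : V → ℝ} (h : HasFlowDivergence E d)
    (h' : HasFlowDivergence E d') : HasFlowDivergence E (d + d') := by
  obtain ⟨Q, hQ, rfl⟩ := h
  obtain ⟨Q', hQ', rfl⟩ := h'
  refine ⟨Q + Q', ⟨fun e => add_nonneg (hQ.1 e) (hQ'.1 e), fun e he => ?_⟩, divergenceF_add Q Q'⟩
  simp [hQ.2 e he, hQ'.2 e he]

lemma HasFlowDivergence.smul {d : V → ℝ} (h : HasFlowDivergence E d) {c : ℝ} (hc : 0 ≤ c) :
    HasFlowDivergence E (c • d) := by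
  obtain ⟨Q, hQ, rfl⟩ := h
  refine ⟨c • Q, ⟨fun e => mul_nonneg hc (hQ.1 e), fun e he => ?_⟩, divergenceF_smul c Q⟩
  simp [hQ.2 e he]

lemma HasFlowDivergence.sum {ι : Type*} {s : Finset ι} {d : ι → V → ℝ}
    (h : ∀ i ∈ s, HasFlowDivergence E (d i)) : HasFlowDivergence E (∑ i ∈ s, d i) :=
  Finset.sum_induction d _ (fun _ _ => HasFlowDivergence.add) hasFlowDivergence_zero h

lemma hasFlowDivergence_of_mem [DecidableEq V] {a b : V} (hab : (a, b) ∈ E) :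
    HasFlowDivergence E (Pi.single a 1 - Pi.single b 1) := by
  refine ⟨Pi.single (a, b) 1, ⟨fun e => ?_, fun e he => ?_⟩, divergenceF_single a b⟩
  · by_cases h : e = (a, b) <;> simp [h]
  · have : e ≠ (a, b) := by rintro rfl; exact he hab
    simp [this]

lemma hasFlowDivergence_of_inducedLE [DecidableEq V] {x y : V} (hxy : inducedLE E x y) :
    HasFlowDivergence E (Pi.single x 1 - Pi.single y 1) := by
  induction hxy using Relation.ReflTransGen.head_induction_on with
  | refl => simpa using hasFlowDivergence_zero
  | @head a c hac _ ih =>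
    simpa using (hasFlowDivergence_of_mem hac).add ih

lemma sub_eq_sum_smul_single_sub_single [DecidableEq V] {μ₁ μ₂ : V → ℝ} {ρ : V × V → ℝ}
    (hρ : IsCouplingF μ₁ μ₂ ρ) :
    μ₁ - μ₂ = ∑ p : V × V, ρ p • (Pi.single p.1 1 - Pi.single p.2 1 : V → ℝ) := by
  ext x
  have hrow : ∑ p : V × V, ρ p * (Pi.single p.1 1 : V → ℝ) x = μ₁ x := by
    rw [Fintype.sum_prod_type, Fintype.sum_eq_single x fun a ha => by simp [ha.symm]]
    simp [hρ.2.1 x]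
  have hcol : ∑ p : V × V, ρ p * (Pi.single p.2 1 : V → ℝ) x = μ₂ x := by
    rw [Fintype.sum_prod_type_right, Fintype.sum_eq_single x fun b hb => by simp [hb.symm]]
    simp [hρ.2.2 x]
  simp [Finset.sum_apply, mul_sub, hrow, hcol]

lemma hasFlowDivergence_of_isCouplingF {μ₁ μ₂ : V → ℝ} {ρ : V × V → ℝ}
    (hρ : IsCouplingF μ₁ μ₂ ρ) (hsupp : ∀ p : V × V, ρ p ≠ 0 → inducedLE E p.1 p.2) :
    HasFlowDivergence E (μ₁ - μ₂) := by
  classical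
  rw [sub_eq_sum_smul_single_sub_single hρ]
  refine HasFlowDivergence.sum fun p _ => ?_
  by_cases h : ρ p = 0
  · simpa [h] using hasFlowDivergence_zero
  · exact (hasFlowDivergence_of_inducedLE (hsupp p h)).smul (hρ.1 p)

end Flows

lemma LinearMap.apply_eq_sum_apply_single_mul {R ι : Type*} [CommSemiring R] [Fintype ι]
    [DecidableEq ι] (L : (ι → R) →ₗ[R] R) (φ : ι → R) : L φ = ∑ i, L (Pi.single i 1) * φ i := by
  conv_lhs => rw [← Finset.univ_sum_single φ]
  refine (map_sum L _ _).trans (Finset.sum_congr rfl fun i _ => ?_)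
  rw [mul_comm, ← smul_eq_mul, ← map_smul, ← Pi.single_smul', smul_eq_mul, mul_one]

section Couplings

variable [Fintype V]

def compatibleSimplex (r : V → V → Prop) : Set (V × V → ℝ) :=
  stdSimplex ℝ (V × V) ∩ {ρ | ∀ p : V × V, ¬ r p.1 p.2 → ρ p = 0}

lemma convex_compatibleSimplex (r : V → V → Prop) : Convex ℝ (compatibleSimplex r) := by
  refine (convex_stdSimplex ℝ _).inter fun ρ hρ σ hσ a b _ _ _ p hp => ?_
  simp [hρ p hp, hσ p hp]

lemma isCompact_compatibleSimplex (r : V → V → Prop) : IsCompact (compatibleSimplex r) :=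
  (isCompact_stdSimplex ℝ _).inter_right <| by
    simp only [Set.ofPred_forall]
    exact isClosed_iInter fun p => isClosed_iInter fun _ =>
      isClosed_eq (continuous_apply p) continuous_const

/-- The pair of marginals of `ρ`, encoded as one function on `V ⊕ V`. -/
noncomputable def marginals : (V × V → ℝ) →ₗ[ℝ] (V ⊕ V → ℝ) :=
  LinearMap.pi <|
    Sum.elim (fun x => ∑ y, LinearMap.proj (x, y)) (fun y => ∑ x, LinearMap.proj (x, y))

@[simp]
lemma marginals_apply_inl (ρ : V × V → ℝ) (x : V) : marginals ρ (.inl x) = ∑ y, ρ (x, y) := by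
  simp only [marginals, LinearMap.pi_apply, Sum.elim_inl, LinearMap.sum_apply,
    LinearMap.proj_apply]

@[simp]
lemma marginals_apply_inr (ρ : V × V → ℝ) (y : V) : marginals ρ (.inr y) = ∑ x, ρ (x, y) := by
  simp only [marginals, LinearMap.pi_apply, Sum.elim_inr, LinearMap.sum_apply,
    LinearMap.proj_apply]

lemma marginals_single [DecidableEq V] (x y : V) :
    marginals (Pi.single (x, y) 1) = (Pi.single (.inl x) 1 + Pi.single (.inr y) 1 : V ⊕ V → ℝ) := by
  ext (a | b) <;> simp [Pi.single_apply, ite_and, Finset.sum_ite_irrel]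

lemma isCouplingF_of_marginals_eq {μ₁ μ₂ : V → ℝ} {ρ : V × V → ℝ} (hρ : ∀ p, 0 ≤ ρ p)
    (h : marginals ρ = Sum.elim μ₁ μ₂) : IsCouplingF μ₁ μ₂ ρ :=
  ⟨hρ, fun x => by simpa using congrFun h (.inl x), fun y => by simpa using congrFun h (.inr y)⟩

lemma exists_potentials_of_notMem_image_marginals {r : V → V → Prop} {μ₁ μ₂ : V → ℝ}
    (h : Sum.elim μ₁ μ₂ ∉ marginals '' compatibleSimplex r) :
    ∃ (f g : V → ℝ) (u : ℝ), ∑ x, f x * μ₁ x + ∑ x, g x * μ₂ x < u ∧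
      ∀ x y, r x y → u < f x + g y := by
  classical
  obtain ⟨L, u, hLμ, hL⟩ := geometric_hahn_banach_point_closed
    ((convex_compatibleSimplex r).linear_image marginals)
    ((isCompact_compatibleSimplex r).image marginals.continuous_of_finiteDimensional).isClosed h
  refine ⟨fun x => L (Pi.single (.inl x) 1), fun y => L (Pi.single (.inr y) 1), u, ?_,
    fun x y hxy => ?_⟩
  · have hrep := LinearMap.apply_eq_sum_apply_single_mul (L : (V ⊕ V → ℝ) →ₗ[ℝ] ℝ) (Sum.elim μ₁ μ₂)
    simp only [ContinuousLinearMap.coe_coe, Fintype.sum_sum_type, Sum.elim_inl, Sum.elim_inr]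
      at hrep
    rwa [hrep] at hLμ
  · have hδ : Pi.single (x, y) 1 ∈ compatibleSimplex r := by
      refine ⟨single_mem_stdSimplex ℝ _, fun p hp => ?_⟩
      have : p ≠ (x, y) := by rintro rfl; exact hp hxy
      simp [this]
    simpa [marginals_single] using hL _ ⟨_, hδ, rfl⟩

lemma exists_monotone_minorant {r : V → V → Prop} (hrefl : ∀ x, r x x)
    (htrans : ∀ x y z, r x y → r y z → r x z) (g : V → ℝ) :
    ∃ G : V → ℝ, (∀ x y, r x y → G x ≤ G y) ∧ G ≤ g ∧ ∀ x, ∃ z, r x z ∧ G x = g z := by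
  classical
  have hne : ∀ x, (Finset.univ.filter (r x)).Nonempty := fun x => ⟨x, by simp [hrefl]⟩
  refine ⟨fun x => (Finset.univ.filter (r x)).inf' (hne x) g, fun x y hxy => ?_, fun x => ?_,
    fun x => ?_⟩
  · exact Finset.le_inf' _ _ fun z hz =>
      Finset.inf'_le _ (by simpa using htrans x y z hxy (by simpa using hz))
  · exact Finset.inf'_le _ (by simp [hrefl])
  · obtain ⟨z, hz, hGz⟩ := Finset.exists_mem_eq_inf' (hne x) g
    exact ⟨z, by simpa using hz, hGz⟩

lemma not_stochDomF_of_potentials {r : V → V → Prop} (hrefl : ∀ x, r x x)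
    (htrans : ∀ x y z, r x y → r y z → r x z) {μ₁ μ₂ : V → ℝ} (h₁ : IsProbF μ₁)
    (h₂ : ∀ x, 0 ≤ μ₂ x) {f g : V → ℝ} {u : ℝ} (hμ : ∑ x, f x * μ₁ x + ∑ x, g x * μ₂ x < u)
    (hfg : ∀ x y, r x y → u < f x + g y) : ¬ StochDomF r μ₁ μ₂ := by
  intro hdom
  obtain ⟨G, hG_mono, hG_le, hG_attained⟩ := exists_monotone_minorant hrefl htrans g
  have hf : ∀ x, u - G x ≤ f x := fun x => by
    obtain ⟨z, hxz, hGz⟩ := hG_attained x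
    linarith [hfg x z hxz]
  have h_f : ∑ x, (u - G x) * μ₁ x ≤ ∑ x, f x * μ₁ x :=
    Finset.sum_le_sum fun x _ => mul_le_mul_of_nonneg_right (hf x) (h₁.1 x)
  have h_g : ∑ x, G x * μ₂ x ≤ ∑ x, g x * μ₂ x :=
    Finset.sum_le_sum fun x _ => mul_le_mul_of_nonneg_right (hG_le x) (h₂ x)
  have h_u : ∑ x, (u - G x) * μ₁ x = u - ∑ x, G x * μ₁ x := by
    simp only [sub_mul, Finset.sum_sub_distrib, ← Finset.mul_sum, h₁.2, mul_one]
  linarith [hdom G hG_mono]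

lemma exists_isCouplingF_of_stochDomF {r : V → V → Prop} (hrefl : ∀ x, r x x)
    (htrans : ∀ x y z, r x y → r y z → r x z) {μ₁ μ₂ : V → ℝ} (h₁ : IsProbF μ₁)
    (h₂ : ∀ x, 0 ≤ μ₂ x) (hdom : StochDomF r μ₁ μ₂) :
    ∃ ρ : V × V → ℝ, IsCouplingF μ₁ μ₂ ρ ∧ ∀ p : V × V, ρ p ≠ 0 → r p.1 p.2 := by
  by_contra hno
  have hnotMem : Sum.elim μ₁ μ₂ ∉ marginals '' compatibleSimplex r := by
    rintro ⟨ρ, ⟨hρ, hsupp⟩, hmarg⟩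
    exact hno ⟨ρ, isCouplingF_of_marginals_eq hρ.1 hmarg, fun p hp => not_not.1 (mt (hsupp p) hp)⟩
  obtain ⟨f, g, u, hμ, hfg⟩ := exists_potentials_of_notMem_image_marginals hnotMem
  exact not_stochDomF_of_potentials hrefl htrans h₁ h₂ hμ hfg hdom

end Couplings

theorem strassen_finite_general {V : Type*} [Fintype V]
    (E : Set (V × V))
    (μ₁ μ₂ : V → ℝ) (h₁ : IsProbF μ₁) (h₂ : IsProbF μ₂) :
    (StochDomF (inducedLE E) μ₁ μ₂ ↔
      ∃ ρ : V × V → ℝ, IsCouplingF μ₁ μ₂ ρ ∧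
        ∀ p : V × V, ρ p ≠ 0 → inducedLE E p.1 p.2) ∧
    (StochDomF (inducedLE E) μ₁ μ₂ ↔
      ∃ Q : V × V → ℝ, IsFlow E Q ∧ ∀ x, divergenceF Q x = μ₁ x - μ₂ x) := by
  have h12 : StochDomF (inducedLE E) μ₁ μ₂ → ∃ ρ, IsCouplingF μ₁ μ₂ ρ ∧
      ∀ p : V × V, ρ p ≠ 0 → inducedLE E p.1 p.2 :=
    exists_isCouplingF_of_stochDomF (fun _ => .refl) (fun _ _ _ => .trans) h₁ h₂.1
  have h23 : (∃ ρ, IsCouplingF μ₁ μ₂ ρ ∧ ∀ p : V × V, ρ p ≠ 0 → inducedLE E p.1 p.2) →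
      HasFlowDivergence E (μ₁ - μ₂) :=
    fun ⟨_, hρ, hsupp⟩ => hasFlowDivergence_of_isCouplingF hρ hsupp
  have h31 : HasFlowDivergence E (μ₁ - μ₂) → StochDomF (inducedLE E) μ₁ μ₂ :=
    stochDomF_of_hasFlowDivergence
  have h_flow : (∃ Q, IsFlow E Q ∧ ∀ x, divergenceF Q x = μ₁ x - μ₂ x) ↔
      HasFlowDivergence E (μ₁ - μ₂) := by
    simp only [HasFlowDivergence, funext_iff, Pi.sub_apply]
  rw [h_flow]
  exact ⟨⟨h12, h31 ∘ h23⟩, ⟨h23 ∘ h12, h31⟩⟩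

/-- **Strassen's theorem with a third equivalent statement, finite case.**
For a finite poset described by an acyclic digraph `(V, E)` whose transitive closure
induces the order, the following are equivalent: (1) `μ₁ ⪯ μ₂`; (2) there is a coupling
of `μ₁, μ₂` compatible with the order; (3) there is a flow `Q` on `(V, E)` with
`div Q = μ₁ - μ₂`. -/
theorem strassen_finite {V : Type*} [Fintype V]
    (E : Set (V × V)) (hloop : ∀ x : V, (x, x) ∉ E) (hacyc : AcyclicRel (edgeRel E))
    (μ₁ μ₂ : V → ℝ) (h₁ : IsProbF μ₁) (h₂ : IsProbF μ₂) :
    (StochDomF (inducedLE E) μ₁ μ₂ ↔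
      ∃ ρ : V × V → ℝ, IsCouplingF μ₁ μ₂ ρ ∧
        ∀ p : V × V, ρ p ≠ 0 → inducedLE E p.1 p.2) ∧
    (StochDomF (inducedLE E) μ₁ μ₂ ↔
      ∃ Q : V × V → ℝ, IsFlow E Q ∧ ∀ x, divergenceF Q x = μ₁ x - μ₂ x) :=
  strassen_finite_general E μ₁ μ₂ h₁ h₂
end

section
/- Let Q be an acyclic flow on an infinite digraph (V,E) with countable vertex set such that div Q = μ₁ − μ₂ for two probability measures μ₁, μ₂ on V. If Q has zero flux towards infinity, then Q is finitely decomposable. -/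
open scoped BigOperators

variable {V : Type*}

/-!
Normalise the flow by its throughput `I x = ∑_y Q(x,y) + μ₂ x = ∑_y Q(y,x) + μ₁ x`: this gives a
sub-Markov chain `p(a,b) = Q(a,b) / I(a)`, killed at `x` with probability `μ₂ x / I x`. Give each
finite path the weight `μ₁(start) · ∏ p · (μ₂ / I)(end)`. Since the flow is acyclic, a path
through the edge `(a,b)` splits uniquely there, so the paths through `(a,b)` weigh
`R(a) · p(a,b) · H(b)`, where `H(b)` is the probability that the chain started at `b` is killed
and `R(a)` the expected number of visits to `a` of the chain started from `μ₁`; reversing paths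
gives `R(a) = I(a) · H'(a)` for the chain of the reversed flow.

Zero flux towards infinity forces `H = 1`: by acyclicity the chain started at `y ∈ V_n` survives
`|V_n|` steps only by leaving `V_n`, and as `I` is excessive, the part of the mass `I(y)` that
does so is bounded by the flux out of `V_n`. The reversed flow has zero flux as well, since the
fluxes into and out of `V_n` differ by `μ₁(V_n) - μ₂(V_n) → 0`. Hence the paths through `(a,b)`
carry exactly `I(a) · p(a,b) = Q(a,b)`, and the weights sum to `1`.
-/

open scoped ENNReal Classical
open Filter Topology

section Paths

theorem pathEdges_cons_cons (a b : V) (l : List V) :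
    pathEdges (a :: b :: l) = (a, b) :: pathEdges (b :: l) := rfl

theorem pathEdges_cons (a : V) {l : List V} (hl : l ≠ []) :
    pathEdges (a :: l) = (a, l.head hl) :: pathEdges l := by
  cases l with
  | nil => exact absurd rfl hl
  | cons b t => rfl

theorem pathEdges_append {a b : List V} (ha : a ≠ []) (hb : b ≠ []) :
    pathEdges (a ++ b) = pathEdges a ++ (a.getLast ha, b.head hb) :: pathEdges b := by
  induction a with
  | nil => exact absurd rfl ha
  | cons x a ih =>
    rcases eq_or_ne a [] with rfl | ha'
    · exact pathEdges_cons x hb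
    · rw [List.cons_append, pathEdges_cons x (by simp [ha']), ih ha',
        pathEdges_cons x ha', List.getLast_cons ha', List.head_append_of_ne_nil ha']
      rfl

theorem mem_pathEdges_iff {u v : V} {l : List V} :
    (u, v) ∈ pathEdges l ↔ ∃ a b, l = a ++ u :: v :: b := by
  induction l with
  | nil => simp [pathEdges]
  | cons x t ih =>
    cases t with
    | nil =>
      simp only [pathEdges, List.tail_cons, List.zip_nil_right, List.not_mem_nil, false_iff]
      rintro ⟨a, b, h⟩
      have := congrArg List.length h
      simp at this
      omega
    | cons y t =>
      rw [pathEdges_cons_cons, List.mem_cons, ih, Prod.mk.injEq]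
      constructor
      · rintro (⟨rfl, rfl⟩ | ⟨a, b, h⟩)
        · exact ⟨[], t, rfl⟩
        · exact ⟨x :: a, b, by rw [h, List.cons_append]⟩
      · rintro ⟨_ | ⟨c, a⟩, b, h⟩
        · simp_all
        · simp only [List.cons_append, List.cons.injEq] at h
          exact Or.inr ⟨a, b, h.2⟩

theorem isChain_iff_forall_mem_pathEdges {r : V → V → Prop} {l : List V} :
    l.IsChain r ↔ ∀ e ∈ pathEdges l, r e.1 e.2 := by
  simp only [List.isChain_iff_forall_rel_of_append_cons_cons, Prod.forall, mem_pathEdges_iff]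
  grind

theorem AcyclicRel.mono {r s : V → V → Prop} (hs : AcyclicRel s) (h : ∀ a b, r a b → s a b) :
    AcyclicRel r :=
  fun x hx => hs x (Relation.TransGen.mono h x x hx)

theorem List.IsChain.nodup {r : V → V → Prop} (hr : AcyclicRel r) {l : List V}
    (h : l.IsChain r) : l.Nodup :=
  (h.imp fun _ _ => Relation.TransGen.single).pairwise.imp fun {a _} hab heq => by
    subst heq
    exact hr a hab

end Paths

section PathWeight

variable {p : V → V → ℝ≥0∞}

noncomputable def pathWeight (p : V → V → ℝ≥0∞) (l : List V) : ℝ≥0∞ :=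
  ((pathEdges l).map fun e => p e.1 e.2).prod

noncomputable def headMass (m : V → ℝ≥0∞) (l : List V) : ℝ≥0∞ := l.head?.elim 0 m

noncomputable def lastMass (m : V → ℝ≥0∞) (l : List V) : ℝ≥0∞ := l.getLast?.elim 0 m

@[simp]
theorem pathWeight_singleton (a : V) : pathWeight p [a] = 1 := rfl

theorem pathWeight_cons (a : V) {l : List V} (hl : l ≠ []) :
    pathWeight p (a :: l) = p a (l.head hl) * pathWeight p l := by
  simp [pathWeight, pathEdges_cons a hl]

theorem pathWeight_append {a b : List V} (ha : a ≠ []) (hb : b ≠ []) :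
    pathWeight p (a ++ b) = pathWeight p a * (p (a.getLast ha) (b.head hb) * pathWeight p b) := by
  simp [pathWeight, pathEdges_append ha hb]

theorem pathWeight_eq_zero_of_mem {l : List V} {x y : V} (hmem : (x, y) ∈ pathEdges l)
    (hz : p x y = 0) : pathWeight p l = 0 :=
  List.prod_eq_zero (List.mem_map.2 ⟨(x, y), hmem, hz⟩)

theorem isChain_of_pathWeight_ne_zero {l : List V} (h : pathWeight p l ≠ 0) :
    l.IsChain fun a b => p a b ≠ 0 :=
  isChain_iff_forall_mem_pathEdges.2 fun _ he hz => h (pathWeight_eq_zero_of_mem he hz)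

theorem lastMass_of_getLast? {m : V → ℝ≥0∞} {l : List V} {x : V} (h : l.getLast? = some x) :
    lastMass m l = m x := by
  simp [lastMass, h]

theorem headMass_append {m : V → ℝ≥0∞} {a : List V} (b : List V) (ha : a ≠ []) :
    headMass m (a ++ b) = headMass m a := by
  simp [headMass, List.head?_append, List.head?_eq_some_head ha]

theorem lastMass_append {m : V → ℝ≥0∞} (a : List V) {b : List V} (hb : b ≠ []) :
    lastMass m (a ++ b) = lastMass m b := by
  simp [lastMass, List.getLast?_append_of_ne_nil _ hb]

theorem lastMass_cons {m : V → ℝ≥0∞} (a : V) {l : List V} (hl : l ≠ []) :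
    lastMass m (a :: l) = lastMass m l :=
  lastMass_append [a] hl

theorem headMass_reverse (m : V → ℝ≥0∞) (l : List V) : headMass m l.reverse = lastMass m l := by
  simp [headMass, lastMass]

end PathWeight

section Kernel

variable {p : V → V → ℝ≥0∞}

noncomputable def kernelApply (p : V → V → ℝ≥0∞) (f : V → ℝ≥0∞) (y : V) : ℝ≥0∞ :=
  ∑' z, p y z * f z

noncomputable def kernelPush (p : V → V → ℝ≥0∞) (μ : V → ℝ≥0∞) (u : V) : ℝ≥0∞ :=
  ∑' z, μ z * p z u

theorem kernelApply_mono {f g : V → ℝ≥0∞} (h : f ≤ g) : kernelApply p f ≤ kernelApply p g :=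
  fun _ => ENNReal.tsum_le_tsum fun z => mul_le_mul_right (h z) _

theorem kernelApply_add (f g : V → ℝ≥0∞) :
    kernelApply p (f + g) = kernelApply p f + kernelApply p g := by
  ext y
  simp only [kernelApply, Pi.add_apply, mul_add, ENNReal.tsum_add]

theorem kernelApply_sum {ι : Type*} (s : Finset ι) (f : ι → V → ℝ≥0∞) :
    kernelApply p (∑ i ∈ s, f i) = ∑ i ∈ s, kernelApply p (f i) := by
  ext y
  simp only [kernelApply, Finset.sum_apply, Finset.mul_sum]
  exact Summable.tsum_finsetSum fun _ _ => ENNReal.summable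

theorem kernelApply_iterate_le_one (hp : ∀ y, ∑' z, p y z ≤ 1) {f : V → ℝ≥0∞} (hf : f ≤ 1)
    (n : ℕ) : (kernelApply p)^[n] f ≤ 1 := by
  induction n with
  | zero => exact hf
  | succ n ih =>
    intro y
    rw [Function.iterate_succ_apply']
    calc kernelApply p _ y ≤ kernelApply p 1 y := kernelApply_mono ih y
      _ ≤ 1 := by simpa [kernelApply] using hp y

theorem tsum_kernelPush_iterate_mul (μ f : V → ℝ≥0∞) (t : ℕ) :
    ∑' u, (kernelPush p)^[t] μ u * f u = ∑' z, μ z * (kernelApply p)^[t] f z := by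
  induction t generalizing μ with
  | zero => rfl
  | succ t ih =>
    rw [Function.iterate_succ_apply, ih, Function.iterate_succ_apply']
    simp only [kernelPush, kernelApply, ← ENNReal.tsum_mul_right, ← ENNReal.tsum_mul_left,
      mul_assoc]
    exact ENNReal.tsum_comm

theorem kernelPush_iterate_ne_zero {μ : V → ℝ≥0∞} {t : ℕ} {u : V}
    (h : (kernelPush p)^[t + 1] μ u ≠ 0) :
    ∃ z, μ z ≠ 0 ∧ Relation.TransGen (fun a b => p a b ≠ 0) z u := by
  induction t generalizing u with
  | zero =>
    obtain ⟨z, hz⟩ := not_forall.1 (mt ENNReal.tsum_eq_zero.2 h)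
    exact ⟨z, left_ne_zero_of_mul hz, .single (right_ne_zero_of_mul hz)⟩
  | succ t ih =>
    rw [Function.iterate_succ_apply'] at h
    obtain ⟨w, hw⟩ := not_forall.1 (mt ENNReal.tsum_eq_zero.2 h)
    obtain ⟨z, hz, hzw⟩ := ih (left_ne_zero_of_mul hw)
    exact ⟨z, hz, hzw.tail (right_ne_zero_of_mul hw)⟩

/-- Mass reaches `u ≠ y` only through `p`, which the excessive measure `ν` controls, and
acyclicity forbids returns to `y`. -/
theorem sum_kernelPush_iterate_single_le {ν : V → ℝ≥0∞} (hν : ∀ u, kernelPush p ν u ≤ ν u)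
    (hacyc : AcyclicRel fun a b => p a b ≠ 0) (y : V) (n : ℕ) (u : V) :
    ∑ t ∈ Finset.range n, (kernelPush p)^[t] (Pi.single y (ν y)) u ≤ ν u := by
  induction n generalizing u with
  | zero => simp
  | succ n ih =>
    rw [Finset.sum_range_succ']
    by_cases hu : u = y
    · subst hu
      have hret : ∀ t, (kernelPush p)^[t + 1] (Pi.single u (ν u)) u = 0 := by
        intro t
        by_contra h
        obtain ⟨z, hz, hzu⟩ := kernelPush_iterate_ne_zero h
        obtain rfl : z = u := by by_contra hne; simp [hne] at hz
        exact hacyc z hzu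
      simp [hret]
    · simp only [Function.iterate_succ_apply', Function.iterate_zero_apply, Pi.single_apply, hu,
        if_false, add_zero]
      calc ∑ t ∈ Finset.range n, kernelPush p ((kernelPush p)^[t] (Pi.single y (ν y))) u
          = kernelPush p (∑ t ∈ Finset.range n, (kernelPush p)^[t] (Pi.single y (ν y))) u := by
            simp only [kernelPush, Finset.sum_apply, Finset.sum_mul]
            exact (Summable.tsum_finsetSum fun _ _ => ENNReal.summable).symm
        _ ≤ kernelPush p ν u :=
            ENNReal.tsum_le_tsum fun z => by gcongr; simpa using ih z
        _ ≤ ν u := hν u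

end Kernel

section Restrict

variable {p : V → V → ℝ≥0∞} {S : Finset V}

noncomputable def restrictKernel (p : V → V → ℝ≥0∞) (S : Finset V) (a b : V) : ℝ≥0∞ :=
  if b ∈ S then p a b else 0

noncomputable def exitMass (p : V → V → ℝ≥0∞) (S : Finset V) (a : V) : ℝ≥0∞ :=
  ∑' b, if b ∈ S then 0 else p a b

noncomputable def outflux (q : V → V → ℝ≥0∞) (S : Finset V) : ℝ≥0∞ :=
  ∑ x ∈ S, exitMass q S x

theorem kernelApply_le_restrictKernel_add_exitMass {f : V → ℝ≥0∞} (hf : f ≤ 1) :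
    kernelApply p f ≤ kernelApply (restrictKernel p S) f + exitMass p S := by
  intro y
  simp only [kernelApply, exitMass, Pi.add_apply, ← ENNReal.tsum_add]
  refine ENNReal.tsum_le_tsum fun z => ?_
  by_cases hz : z ∈ S
  · simp [restrictKernel, hz]
  · simpa [restrictKernel, hz] using mul_le_of_le_one_right' (hf z)

theorem kernelApply_iterate_one_le (hp : ∀ y, ∑' z, p y z ≤ 1) (n : ℕ) :
    (kernelApply p)^[n] 1 ≤ (kernelApply (restrictKernel p S))^[n] 1 +
      ∑ t ∈ Finset.range n, (kernelApply (restrictKernel p S))^[t] (exitMass p S) := by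
  induction n with
  | zero => simp
  | succ n ih =>
    simp only [Function.iterate_succ_apply']
    calc kernelApply p ((kernelApply p)^[n] 1)
        ≤ kernelApply (restrictKernel p S) ((kernelApply p)^[n] 1) + exitMass p S :=
          kernelApply_le_restrictKernel_add_exitMass (kernelApply_iterate_le_one hp le_rfl n)
      _ ≤ _ := by
          grw [kernelApply_mono ih, kernelApply_add, kernelApply_sum, Finset.sum_range_succ',
            add_assoc]
          simp [Function.iterate_succ_apply']

theorem exists_rank {r : V → V → Prop} (hr : AcyclicRel r) (S : Finset V) :
    ∃ rk : V → ℕ, (∀ y ∈ S, rk y < S.card) ∧ ∀ a ∈ S, ∀ b ∈ S, r a b → rk a < rk b := by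
  refine ⟨fun y => (S.filter fun v => Relation.TransGen r v y).card, fun y hy => ?_,
    fun a ha b hb hab => Finset.card_lt_card ?_⟩
  · refine (Finset.card_le_card fun v hv => ?_).trans_lt (Finset.card_erase_lt_of_mem hy)
    rw [Finset.mem_filter] at hv
    exact Finset.mem_erase.2 ⟨fun h => hr v (h ▸ hv.2), hv.1⟩
  · refine Finset.ssubset_iff_of_subset (fun v hv => ?_) |>.2
      ⟨a, Finset.mem_filter.2 ⟨ha, .single hab⟩, fun h => hr a (Finset.mem_filter.1 h).2⟩
    rw [Finset.mem_filter] at hv ⊢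
    exact ⟨hv.1, hv.2.tail hab⟩

theorem kernelApply_restrictKernel_iterate_card_eq_zero (hacyc : AcyclicRel fun a b => p a b ≠ 0)
    (f : V → ℝ≥0∞) {x : V} (hx : x ∈ S) : (kernelApply (restrictKernel p S))^[S.card] f x = 0 := by
  obtain ⟨rk, hrkS, hrk⟩ := exists_rank hacyc S
  suffices ∀ n, ∀ x ∈ S, S.card ≤ n + rk x → (kernelApply (restrictKernel p S))^[n] f x = 0 from
    this _ x hx (Nat.le_add_right _ _)
  intro n
  induction n with
  | zero => intro x hx hle; exact absurd hle (by simpa using hrkS x hx)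
  | succ n ih =>
    intro x hx hle
    rw [Function.iterate_succ_apply', kernelApply, ENNReal.tsum_eq_zero]
    intro z
    by_cases hz : z ∈ S
    · by_cases hpz : p x z = 0
      · simp [restrictKernel, hpz]
      · rw [ih z hz (by have := hrk x hx z hz hpz; omega), mul_zero]
    · simp [restrictKernel, hz]

end Restrict

section Telescope

variable {p : V → V → ℝ≥0∞}

theorem kernelApply_iterate_add (f g : V → ℝ≥0∞) (n : ℕ) :
    (kernelApply p)^[n] (f + g) = (kernelApply p)^[n] f + (kernelApply p)^[n] g := by
  induction n with
  | zero => rfl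
  | succ n ih => simp only [Function.iterate_succ_apply', ih, kernelApply_add]

theorem kernelApply_iterate_congr {A : Set V} (hA : ∀ x ∈ A, ∀ z, p x z ≠ 0 → z ∈ A)
    {f g : V → ℝ≥0∞} (hfg : ∀ x ∈ A, f x = g x) (n : ℕ) :
    ∀ x ∈ A, (kernelApply p)^[n] f x = (kernelApply p)^[n] g x := by
  induction n with
  | zero => exact hfg
  | succ n ih =>
    intro x hx
    simp only [Function.iterate_succ_apply', kernelApply]
    refine tsum_congr fun z => ?_
    by_cases hz : p x z = 0
    · simp [hz]
    · rw [ih z (hA x hx z hz)]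

theorem sum_range_kernelApply_iterate_add_iterate_one {d : V → ℝ≥0∞} {A : Set V}
    (hstoch : ∀ x ∈ A, ∑' z, p x z + d x = 1) (hA : ∀ x ∈ A, ∀ z, p x z ≠ 0 → z ∈ A)
    (n : ℕ) {y : V} (hy : y ∈ A) :
    ∑ i ∈ Finset.range n, (kernelApply p)^[i] d y + (kernelApply p)^[n] 1 y = 1 := by
  have hstep : ∀ n, ∀ x ∈ A,
      (kernelApply p)^[n] 1 x = (kernelApply p)^[n] d x + (kernelApply p)^[n + 1] 1 x := by
    intro n x hx
    have h1 : ∀ x ∈ A, (1 : V → ℝ≥0∞) x = (d + kernelApply p 1) x := fun x hx => by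
      simpa [kernelApply, add_comm] using (hstoch x hx).symm
    rw [kernelApply_iterate_congr hA h1 n x hx, kernelApply_iterate_add, Pi.add_apply,
      Function.iterate_succ_apply]
  induction n with
  | zero => simp
  | succ n ih => rw [Finset.sum_range_succ, add_assoc, ← hstep n y hy, ih]

end Telescope

section FlowKernel

variable {q : V → V → ℝ≥0∞} {m I : V → ℝ≥0∞}

noncomputable def flowKernel (q : V → V → ℝ≥0∞) (I : V → ℝ≥0∞) (a b : V) : ℝ≥0∞ :=
  q a b / I a

theorem le_of_tsum_add_eq {f : V → ℝ≥0∞} {c s : ℝ≥0∞} (h : ∑' z, f z + c = s) (z : V) :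
    f z ≤ s :=
  h ▸ (ENNReal.le_tsum z).trans le_self_add

theorem ENNReal.mul_div_cancel_of_le {a b : ℝ≥0∞} (h : a ≤ b) (hb : b ≠ ∞) : b * (a / b) = a :=
  ENNReal.mul_div_cancel' (fun h0 => nonpos_iff_eq_zero.1 (h0 ▸ h)) fun h' => absurd h' hb

theorem flowKernel_ne_zero_iff (hI : ∀ x, I x ≠ ∞) {a b : V} :
    flowKernel q I a b ≠ 0 ↔ q a b ≠ 0 := by
  simp [flowKernel, ENNReal.div_eq_zero_iff, hI a]

theorem acyclicRel_flowKernel (hI : ∀ x, I x ≠ ∞) (hacyc : AcyclicRel fun a b => q a b ≠ 0) :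
    AcyclicRel fun a b => flowKernel q I a b ≠ 0 :=
  hacyc.mono fun _ _ => (flowKernel_ne_zero_iff hI).1

theorem tsum_flowKernel (x : V) : ∑' z, flowKernel q I x z = (∑' z, q x z) / I x := by
  simp only [flowKernel, div_eq_mul_inv, ENNReal.tsum_mul_right]

theorem tsum_flowKernel_le_one (hout : ∀ x, ∑' z, q x z + m x = I x) (x : V) :
    ∑' z, flowKernel q I x z ≤ 1 := by
  rw [tsum_flowKernel]
  exact ENNReal.div_le_of_le_mul (by rw [one_mul, ← hout x]; exact le_self_add)

theorem tsum_flowKernel_add_div (hI : ∀ x, I x ≠ ∞) (hout : ∀ x, ∑' z, q x z + m x = I x)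
    {x : V} (hx : I x ≠ 0) : ∑' z, flowKernel q I x z + m x / I x = 1 := by
  rw [tsum_flowKernel, ENNReal.div_add_div_same, hout x, ENNReal.div_self hx (hI x)]

end FlowKernel

section Absorption

variable {q : V → V → ℝ≥0∞} {m I : V → ℝ≥0∞}

/-- The chain started at `y ∈ S` survives `|S|` steps only by leaving `S`, and the mass `I y`
routed out of `S` this way is at most the flux of `q` out of `S`. -/
theorem mul_kernelApply_iterate_one_le_outflux (hI : ∀ x, I x ≠ ∞)
    (hout : ∀ x, ∑' z, q x z + m x = I x) (hin : ∀ x, ∑' z, q z x ≤ I x)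
    (hacyc : AcyclicRel fun a b => q a b ≠ 0) {S : Finset V} {y : V} (hy : y ∈ S) :
    I y * (kernelApply (flowKernel q I))^[S.card] 1 y ≤ outflux q S := by
  set P := flowKernel q I
  set PS := restrictKernel P S
  set μ : ℕ → V → ℝ≥0∞ := fun t => (kernelPush PS)^[t] (Pi.single y (I y))
  have hacycS : AcyclicRel fun a b => PS a b ≠ 0 := (acyclicRel_flowKernel hI hacyc).mono
    fun a b h h0 => h (by simp [PS, P, restrictKernel, h0])
  have hexcessive : ∀ u, kernelPush PS I u ≤ I u := fun u =>
    calc kernelPush PS I u ≤ ∑' z, q z u := ENNReal.tsum_le_tsum fun z => by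
          by_cases hu : u ∈ S
          · simpa [PS, restrictKernel, hu, P, flowKernel] using ENNReal.mul_div_le
          · simp [PS, restrictKernel, hu]
      _ ≤ I u := hin u
  have hsupp : ∀ t, ∀ u ∉ S, μ t u = 0 := by
    rintro (_ | t) u hu
    · simp [μ, show u ≠ y by rintro rfl; exact hu hy]
    · simp [μ, Function.iterate_succ_apply', kernelPush, PS, restrictKernel, hu]
  have hadj : ∀ t f, I y * (kernelApply PS)^[t] f y = ∑' u, μ t u * f u := fun t f => by
    rw [tsum_kernelPush_iterate_mul, tsum_eq_single y (fun z hz => by simp [hz])]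
    simp
  calc I y * (kernelApply P)^[S.card] 1 y
      ≤ I y * ∑ t ∈ Finset.range S.card, (kernelApply PS)^[t] (exitMass P S) y := by
        grw [kernelApply_iterate_one_le (S := S) (tsum_flowKernel_le_one hout) S.card y]
        simp [kernelApply_restrictKernel_iterate_card_eq_zero (acyclicRel_flowKernel hI hacyc) _ hy]
        exact le_rfl
    _ = ∑' u, (∑ t ∈ Finset.range S.card, μ t u) * exitMass P S u := by
        simp only [Finset.mul_sum, hadj, Finset.sum_mul]
        exact (Summable.tsum_finsetSum fun _ _ => ENNReal.summable).symm
    _ ≤ ∑' u, if u ∈ S then I u * exitMass P S u else 0 := ENNReal.tsum_le_tsum fun u => by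
        by_cases hu : u ∈ S
        · rw [if_pos hu]
          gcongr
          exact sum_kernelPush_iterate_single_le hexcessive hacycS y _ u
        · simp [hu, hsupp _ u hu]
    _ ≤ ∑' u, if u ∈ S then exitMass q S u else 0 := ENNReal.tsum_le_tsum fun u => by
        split_ifs
        · simp only [exitMass, ← ENNReal.tsum_mul_left]
          refine ENNReal.tsum_le_tsum fun v => ?_
          split_ifs
          · simp
          · exact ENNReal.mul_div_le
        · exact le_rfl
    _ = outflux q S := by
        rw [tsum_eq_sum (s := S) fun u hu => if_neg hu]
        exact Finset.sum_congr rfl fun u hu => if_pos hu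

theorem tsum_kernelApply_iterate_flowKernel_eq_one (hI : ∀ x, I x ≠ ∞)
    (hout : ∀ x, ∑' z, q x z + m x = I x) (hin : ∀ x, ∑' z, q z x ≤ I x)
    (hacyc : AcyclicRel fun a b => q a b ≠ 0) {Vs : ℕ → Finset V} (hVs : Monotone Vs)
    (hflux : Tendsto (fun k => outflux q (Vs k)) atTop (𝓝 0)) {y : V} (hy : ∃ k, y ∈ Vs k)
    (hIy : I y ≠ 0) :
    ∑' n, (kernelApply (flowKernel q I))^[n] (fun x => m x / I x) y = 1 := by
  set T := ∑' n, (kernelApply (flowKernel q I))^[n] (fun x => m x / I x) y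
  have hclosed : ∀ x z, flowKernel q I x z ≠ 0 → I z ≠ 0 := fun x z hxz h0 =>
    (flowKernel_ne_zero_iff hI).1 hxz
      (nonpos_iff_eq_zero.1 (h0 ▸ (ENNReal.le_tsum x).trans (hin z)))
  have htele := fun n => sum_range_kernelApply_iterate_add_iterate_one (A := {x | I x ≠ 0})
    (fun x hx => tsum_flowKernel_add_div hI hout hx) (fun x _ => hclosed x) n hIy
  have hT : T ≤ 1 := ENNReal.tsum_le_of_sum_range_le fun n => htele n ▸ le_self_add
  obtain ⟨k₀, hk₀⟩ := hy
  have hle : ∀ k ≥ k₀, I y ≤ I y * T + outflux q (Vs k) := fun k hk =>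
    calc I y = I y * (∑ i ∈ Finset.range (Vs k).card,
          (kernelApply (flowKernel q I))^[i] (fun x => m x / I x) y +
          (kernelApply (flowKernel q I))^[(Vs k).card] 1 y) := by rw [htele, mul_one]
      _ ≤ I y * T + outflux q (Vs k) := by
          rw [mul_add]
          gcongr
          · exact ENNReal.sum_le_tsum _
          · exact mul_kernelApply_iterate_one_le_outflux hI hout hin hacyc (hVs hk hk₀)
  have hlim : I y ≤ I y * T := ge_of_tendsto (by simpa using hflux.const_add (I y * T))
    (eventually_atTop.2 ⟨k₀, hle⟩)
  refine le_antisymm hT ?_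
  rwa [← ENNReal.mul_le_mul_iff_right hIy (hI y), mul_one]

end Absorption

section PathSums

theorem ENNReal.tsum_eq_tsum_fiber {α ι : Type*} (F : α → ℝ≥0∞) (k : α → ι) :
    ∑' a, F a = ∑' i, ∑' a, if k a = i then F a else 0 := by
  rw [ENNReal.tsum_comm]
  exact tsum_congr fun a => (tsum_ite_eq' (k a) fun _ => F a).symm

theorem ENNReal.tsum_list_eq_tsum_cons (F : List V → ℝ≥0∞) (h : F [] = 0) :
    ∑' l, F l = ∑' z, ∑' t, F (z :: t) := by
  rw [← ENNReal.tsum_prod]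
  refine (Function.Injective.tsum_eq (g := fun zt : V × List V => zt.1 :: zt.2)
    (fun a b hab => by simpa [Prod.ext_iff] using hab) fun l hl => ?_).symm
  cases l with
  | nil => exact absurd h hl
  | cons z t => exact ⟨(z, t), rfl⟩

theorem eq_of_append_cons_eq_of_nodup {x : V} {s₁ s₂ r₁ r₂ : List V}
    (h : s₁ ++ x :: r₁ = s₂ ++ x :: r₂) (hnd : (s₁ ++ x :: r₁).Nodup) : s₁ = s₂ ∧ r₁ = r₂ := by
  have hx₁ : x ∉ s₁ := fun hx => List.disjoint_of_nodup_append hnd hx List.mem_cons_self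
  have hx₂ : x ∉ s₂ := fun hx => List.disjoint_of_nodup_append (h ▸ hnd) hx List.mem_cons_self
  have hlen : s₁.length = s₂.length := by
    have := congrArg (List.idxOf x) h
    simpa [List.idxOf_append_of_notMem hx₁, List.idxOf_append_of_notMem hx₂] using this
  obtain ⟨hs, hr⟩ := List.append_inj h hlen
  exact ⟨hs, List.cons_injective hr⟩

variable {p : V → V → ℝ≥0∞}

noncomputable def sumFrom (p : V → V → ℝ≥0∞) (d : V → ℝ≥0∞) (y : V) : ℝ≥0∞ :=
  ∑' t, pathWeight p (y :: t) * lastMass d (y :: t)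

noncomputable def sumTo (p : V → V → ℝ≥0∞) (m : V → ℝ≥0∞) (x : V) : ℝ≥0∞ :=
  ∑' s, headMass m (s ++ [x]) * pathWeight p (s ++ [x])

theorem pathWeight_cons_cons (a b : V) (l : List V) :
    pathWeight p (a :: b :: l) = p a b * pathWeight p (b :: l) := by
  simp [pathWeight, pathEdges_cons_cons]

theorem sumFrom_eq_tsum_iterate (d : V → ℝ≥0∞) (y : V) :
    sumFrom p d y = ∑' n, (kernelApply p)^[n] d y := by
  rw [sumFrom, ENNReal.tsum_eq_tsum_fiber _ List.length]
  refine tsum_congr fun n => ?_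
  induction n generalizing y with
  | zero =>
    simp [List.length_eq_zero_iff, lastMass]
  | succ n ih =>
    rw [ENNReal.tsum_list_eq_tsum_cons _ (by simp), Function.iterate_succ_apply', kernelApply]
    refine tsum_congr fun z => ?_
    simp only [List.length_cons, Nat.add_right_cancel_iff, pathWeight_cons_cons,
      lastMass_cons y (List.cons_ne_nil z _), mul_assoc, ← ih z, ← ENNReal.tsum_mul_left]
    exact tsum_congr fun t => by split_ifs <;> simp

end PathSums

section Splitting

variable {p : V → V → ℝ≥0∞}

theorem pathWeight_reverse (l : List V) :
    pathWeight p l.reverse = pathWeight (fun a b => p b a) l := by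
  induction l with
  | nil => rfl
  | cons x l ih =>
    rcases eq_or_ne l [] with rfl | hl
    · simp
    · have hl' : l.reverse ≠ [] := by simpa using hl
      rw [List.reverse_cons, pathWeight_append hl' (List.cons_ne_nil x []), ih,
        pathWeight_cons x hl, List.getLast_reverse, List.head_cons, pathWeight_singleton, mul_one,
        mul_comm]

theorem nodup_of_pathWeight_ne_zero (hacyc : AcyclicRel fun a b => p a b ≠ 0) {l : List V}
    (h : pathWeight p l ≠ 0) : l.Nodup :=
  (isChain_of_pathWeight_ne_zero h).nodup hacyc

theorem pathMass_append_cons_cons (m d : V → ℝ≥0∞) (s t : List V) (x y : V) :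
    headMass m (s ++ x :: y :: t) * pathWeight p (s ++ x :: y :: t) *
        lastMass d (s ++ x :: y :: t) =
      headMass m (s ++ [x]) * pathWeight p (s ++ [x]) *
        (p x y * (pathWeight p (y :: t) * lastMass d (y :: t))) := by
  have hs : s ++ [x] ≠ [] := by simp
  have hst : s ++ x :: y :: t = (s ++ [x]) ++ y :: t := by simp
  rw [hst, headMass_append _ hs, lastMass_append _ (List.cons_ne_nil y t),
    pathWeight_append hs (List.cons_ne_nil y t), List.getLast_concat, List.head_cons]
  ring

/-- On an acyclic support every path through the edge `(x, y)` splits uniquely as a path ending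
at `x` followed by a path starting at `y`. -/
theorem tsum_ite_mem_pathEdges (hacyc : AcyclicRel fun a b => p a b ≠ 0) (m d : V → ℝ≥0∞)
    (x y : V) :
    ∑' l, (if (x, y) ∈ pathEdges l then headMass m l * pathWeight p l * lastMass d l else 0) =
      sumTo p m x * (p x y * sumFrom p d y) := by
  set W : List V → ℝ≥0∞ := fun l => headMass m l * pathWeight p l * lastMass d l
  have hnodup : ∀ l, W l ≠ 0 → l.Nodup := fun l hl =>
    nodup_of_pathWeight_ne_zero hacyc (right_ne_zero_of_mul (left_ne_zero_of_mul hl))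
  calc ∑' l, (if (x, y) ∈ pathEdges l then W l else 0)
      = ∑' st : List V × List V, W (st.1 ++ x :: y :: st.2) := by
        refine tsum_eq_tsum_of_ne_zero_bij (fun st => st.1.1 ++ x :: y :: st.1.2) ?_ ?_ ?_
        · rintro ⟨⟨s₁, t₁⟩, h₁⟩ ⟨⟨s₂, t₂⟩, _⟩ h
          obtain ⟨rfl, ht⟩ := eq_of_append_cons_eq_of_nodup h (hnodup _ h₁)
          obtain rfl := List.cons_injective ht
          rfl
        · intro l hl
          obtain ⟨hmem, hW⟩ := ite_ne_right_iff.1 hl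
          obtain ⟨s, t, rfl⟩ := mem_pathEdges_iff.1 hmem
          exact ⟨⟨(s, t), hW⟩, rfl⟩
        · rintro ⟨⟨s, t⟩, -⟩
          exact if_pos (mem_pathEdges_iff.2 ⟨s, t, rfl⟩)
    _ = sumTo p m x * (p x y * sumFrom p d y) := by
        rw [ENNReal.tsum_prod']
        simp only [W, pathMass_append_cons_cons, sumTo, sumFrom, ENNReal.tsum_mul_left,
          ENNReal.tsum_mul_right]

theorem tsum_pathMass_eq (m d : V → ℝ≥0∞) :
    ∑' l, headMass m l * pathWeight p l * lastMass d l = ∑' z, m z * sumFrom p d z := by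
  rw [ENNReal.tsum_list_eq_tsum_cons _ (by simp [headMass])]
  simp only [sumFrom, ← ENNReal.tsum_mul_left, headMass, List.head?_cons, Option.elim_some,
    mul_assoc]

end Splitting

section Reversal

variable {q : V → V → ℝ≥0∞} {I : V → ℝ≥0∞}

/-- Telescoping along the path: each factor `I a` cancels the denominator of the next edge. -/
theorem mul_pathWeight_flowKernel_swap (hI : ∀ x, I x ≠ ∞) (hle : ∀ a b, q a b ≤ I a)
    (hle' : ∀ a b, q a b ≤ I b) (x : V) (t : List V) :
    I x * pathWeight (flowKernel (fun a b => q b a) I) (x :: t) =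
      lastMass I (x :: t) * pathWeight (flowKernel q I) (x :: t).reverse := by
  rw [pathWeight_reverse]
  induction t generalizing x with
  | nil => simp [lastMass]
  | cons u t ih =>
    rw [pathWeight_cons_cons, pathWeight_cons_cons, lastMass_cons x (List.cons_ne_nil u t),
      ← mul_assoc, flowKernel, ENNReal.mul_div_cancel_of_le (hle' u x) (hI x),
      mul_left_comm, ← ih, flowKernel, ← mul_assoc, mul_comm (q u x / I u),
      ENNReal.mul_div_cancel_of_le (hle u x) (hI u)]

theorem sumTo_flowKernel_eq (hI : ∀ x, I x ≠ ∞) (hle : ∀ a b, q a b ≤ I a)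
    (hle' : ∀ a b, q a b ≤ I b) {m : V → ℝ≥0∞} (hm : ∀ a, m a ≤ I a) (x : V) :
    sumTo (flowKernel q I) m x =
      I x * sumFrom (flowKernel (fun a b => q b a) I) (fun u => m u / I u) x := by
  rw [sumTo, sumFrom, ← ENNReal.tsum_mul_left,
    ← List.reverse_injective.tsum_eq fun l _ => ⟨l.reverse, List.reverse_reverse l⟩]
  refine tsum_congr fun t => ?_
  obtain ⟨L, hL⟩ : ∃ L, (x :: t).getLast? = some L := Option.isSome_iff_exists.1 (by simp)
  have hlast := mul_pathWeight_flowKernel_swap hI hle hle' x t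
  rw [lastMass_of_getLast? hL] at hlast
  rw [← List.reverse_cons, headMass_reverse, lastMass_of_getLast? hL]
  calc m L * pathWeight (flowKernel q I) (x :: t).reverse
      = (m L / I L) * (I L * pathWeight (flowKernel q I) (x :: t).reverse) := by
        rw [← mul_assoc, mul_comm _ (I L), ENNReal.mul_div_cancel_of_le (hm L) (hI L)]
    _ = _ := by rw [← hlast, lastMass_of_getLast? hL]; ring

end Reversal

section Decomposition

variable {q : V → V → ℝ≥0∞} {m₁ m₂ I : V → ℝ≥0∞}

theorem ENNReal.tsum_eq_sum_add_tsum_ite (f : V → ℝ≥0∞) (S : Finset V) :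
    ∑' v, f v = ∑ v ∈ S, f v + ∑' v, if v ∈ S then 0 else f v := by
  have hS : ∑ v ∈ S, f v = ∑' v, if v ∈ S then f v else 0 := by
    rw [tsum_eq_sum (s := S) fun v hv => if_neg hv]
    exact Finset.sum_congr rfl fun v hv => (if_pos hv).symm
  rw [hS, ← ENNReal.tsum_add]
  exact tsum_congr fun v => by by_cases hv : v ∈ S <;> simp [hv]

theorem outflux_add_sum_eq (hI : ∀ x, I x ≠ ∞) (hout : ∀ x, ∑' z, q x z + m₂ x = I x)
    (hin : ∀ x, ∑' z, q z x + m₁ x = I x) (S : Finset V) :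
    outflux q S + ∑ x ∈ S, m₂ x = outflux (fun a b => q b a) S + ∑ x ∈ S, m₁ x := by
  have hfin : ∑ x ∈ S, ∑ v ∈ S, q x v ≠ ∞ :=
    ENNReal.sum_ne_top.2 fun x _ => ne_top_of_le_ne_top (hI x)
      ((ENNReal.sum_le_tsum _).trans (hout x ▸ le_self_add))
  have hsum : ∀ {r : V → V → ℝ≥0∞} {m : V → ℝ≥0∞}, (∀ x, ∑' z, r x z + m x = I x) →
      ∑ x ∈ S, I x = ∑ x ∈ S, ∑ v ∈ S, r x v + (outflux r S + ∑ x ∈ S, m x) := fun h => by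
    rw [outflux, ← Finset.sum_add_distrib, ← Finset.sum_add_distrib]
    refine Finset.sum_congr rfl fun x _ => ?_
    rw [← h x, ENNReal.tsum_eq_sum_add_tsum_ite _ S, exitMass, add_assoc]
  rw [← ENNReal.add_right_inj hfin, ← hsum hout, hsum (r := fun a b => q b a) hin,
    Finset.sum_comm]

theorem tendsto_outflux_swap (hI : ∀ x, I x ≠ ∞) (hout : ∀ x, ∑' z, q x z + m₂ x = I x)
    (hin : ∀ x, ∑' z, q z x + m₁ x = I x) (hmass : ∑' x, m₁ x = ∑' x, m₂ x)
    (hmass' : ∑' x, m₁ x ≠ ∞) {Vs : ℕ → Finset V} (hVs : Monotone Vs)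
    (hcover : ∀ x, ∃ k, x ∈ Vs k) (hflux : Tendsto (fun k => outflux q (Vs k)) atTop (𝓝 0)) :
    Tendsto (fun k => outflux (fun a b => q b a) (Vs k)) atTop (𝓝 0) := by
  have hlim : ∀ m : V → ℝ≥0∞, Tendsto (fun k => ∑ x ∈ Vs k, m x) atTop (𝓝 (∑' x, m x)) :=
    fun m => ENNReal.summable.hasSum.comp (tendsto_atTop_finset_of_monotone hVs hcover)
  have heq : ∀ k, outflux (fun a b => q b a) (Vs k) =
      outflux q (Vs k) + ∑ x ∈ Vs k, m₂ x - ∑ x ∈ Vs k, m₁ x := fun k =>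
    ENNReal.eq_sub_of_add_eq (ne_top_of_le_ne_top hmass' (ENNReal.sum_le_tsum _))
      (outflux_add_sum_eq hI hout hin _).symm
  simpa [heq, hmass] using ENNReal.Tendsto.sub (hflux.add (hlim m₂)) (hlim m₁) (Or.inr hmass')

noncomputable def flowPathMass (q : V → V → ℝ≥0∞) (m₁ m₂ I : V → ℝ≥0∞) (l : List V) : ℝ≥0∞ :=
  headMass m₁ l * pathWeight (flowKernel q I) l * lastMass (fun x => m₂ x / I x) l

theorem flowPathMass_ne_zero (hI : ∀ x, I x ≠ ∞) {l : List V} (h : flowPathMass q m₁ m₂ I l ≠ 0) :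
    l ≠ [] ∧ l.IsChain fun a b => q a b ≠ 0 := by
  refine ⟨fun hl => by simp [hl, flowPathMass, headMass] at h, ?_⟩
  exact (isChain_of_pathWeight_ne_zero (right_ne_zero_of_mul (left_ne_zero_of_mul h))).imp
    fun _ _ => (flowKernel_ne_zero_iff hI).1

theorem tsum_flowPathMass (hI : ∀ x, I x ≠ ∞) (hout : ∀ x, ∑' z, q x z + m₂ x = I x)
    (hin : ∀ x, ∑' z, q z x + m₁ x = I x) (hacyc : AcyclicRel fun a b => q a b ≠ 0)
    {Vs : ℕ → Finset V} (hVs : Monotone Vs) (hcover : ∀ x, ∃ k, x ∈ Vs k)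
    (hflux : Tendsto (fun k => outflux q (Vs k)) atTop (𝓝 0)) :
    ∑' l, flowPathMass q m₁ m₂ I l = ∑' x, m₁ x := by
  simp only [flowPathMass]
  rw [tsum_pathMass_eq]
  refine tsum_congr fun x => ?_
  rcases eq_or_ne (I x) 0 with hx | hx
  · rw [show m₁ x = 0 from nonpos_iff_eq_zero.1 (hx ▸ hin x ▸ le_add_self), zero_mul]
  · rw [sumFrom_eq_tsum_iterate, tsum_kernelApply_iterate_flowKernel_eq_one hI hout
      (fun x => hin x ▸ le_self_add) hacyc hVs hflux (hcover x) hx, mul_one]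

theorem tsum_ite_mem_pathEdges_flowPathMass (hI : ∀ x, I x ≠ ∞)
    (hout : ∀ x, ∑' z, q x z + m₂ x = I x) (hin : ∀ x, ∑' z, q z x + m₁ x = I x)
    (hacyc : AcyclicRel fun a b => q a b ≠ 0) (hmass : ∑' x, m₁ x = ∑' x, m₂ x)
    (hmass' : ∑' x, m₁ x ≠ ∞) {Vs : ℕ → Finset V} (hVs : Monotone Vs)
    (hcover : ∀ x, ∃ k, x ∈ Vs k) (hflux : Tendsto (fun k => outflux q (Vs k)) atTop (𝓝 0))
    (a b : V) :
    ∑' l, (if (a, b) ∈ pathEdges l then flowPathMass q m₁ m₂ I l else 0) = q a b := by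
  have hle : ∀ a b, q a b ≤ I a := fun a => le_of_tsum_add_eq (hout a)
  have hle' : ∀ a b, q a b ≤ I b := fun a b => le_of_tsum_add_eq (f := fun z => q z b) (hin b) a
  rcases eq_or_ne (q a b) 0 with hq | hq
  · rw [hq]
    refine ENNReal.tsum_eq_zero.2 fun l => ?_
    split_ifs with hmem
    · have : flowKernel q I a b = 0 := by simp [flowKernel, hq]
      simp [flowPathMass, pathWeight_eq_zero_of_mem hmem this]
    · rfl
  have hIa : I a ≠ 0 := fun h => hq (nonpos_iff_eq_zero.1 (h ▸ hle a b))
  have hIb : I b ≠ 0 := fun h => hq (nonpos_iff_eq_zero.1 (h ▸ hle' a b))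
  have hforward := tsum_kernelApply_iterate_flowKernel_eq_one hI hout
    (fun x => hin x ▸ le_self_add) hacyc hVs hflux (hcover b) hIb
  have hbackward := tsum_kernelApply_iterate_flowKernel_eq_one (q := fun a b => q b a) hI hin
    (fun x => hout x ▸ le_self_add) (fun x hx => hacyc x (Relation.transGen_swap.1 hx)) hVs
    (tendsto_outflux_swap hI hout hin hmass hmass' hVs hcover hflux) (hcover a) hIa
  simp only [flowPathMass]
  rw [tsum_ite_mem_pathEdges (acyclicRel_flowKernel hI hacyc),
    sumTo_flowKernel_eq hI hle hle' (fun x => hin x ▸ le_add_self), sumFrom_eq_tsum_iterate,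
    sumFrom_eq_tsum_iterate, hforward, hbackward, mul_one, mul_one, flowKernel,
    ENNReal.mul_div_cancel_of_le (hle a b) (hI a)]

end Decomposition

section RealFlows

theorem IsProb.nonempty {μ : V → ℝ} (h : IsProb μ) : Nonempty V := by
  rcases isEmpty_or_nonempty V with hV | hV
  · have := h.2.unique hasSum_empty
    norm_num at this
  · exact hV

theorem IsProb.tsum_ofReal {μ : V → ℝ} (h : IsProb μ) : ∑' x, ENNReal.ofReal (μ x) = 1 := by
  rw [← ENNReal.ofReal_tsum_of_nonneg h.1 h.2.summable, h.2.tsum_eq, ENNReal.ofReal_one]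

theorem tsum_ofReal_add_ofReal {f : V → ℝ} (hf : ∀ z, 0 ≤ f z) (hs : Summable f) {c : ℝ}
    (hc : 0 ≤ c) :
    ∑' z, ENNReal.ofReal (f z) + ENNReal.ofReal c = ENNReal.ofReal (∑' z, f z + c) := by
  rw [ENNReal.ofReal_add (tsum_nonneg hf) hc, ENNReal.ofReal_tsum_of_nonneg hf hs]

theorem tsum_ofReal_add_ofReal_of_divergence {Q : V × V → ℝ} (hQ : ∀ e, 0 ≤ Q e)
    {μ₁ μ₂ : V → ℝ} (h₁ : ∀ x, 0 ≤ μ₁ x) (hin : ∀ x, Summable fun y => Q (y, x))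
    (hdiv : ∀ x, divergence Q x = μ₁ x - μ₂ x) (x : V) :
    ∑' z, ENNReal.ofReal (Q (z, x)) + ENNReal.ofReal (μ₁ x) =
      ENNReal.ofReal (∑' z, Q (x, z) + μ₂ x) := by
  rw [tsum_ofReal_add_ofReal (fun _ => hQ _) (hin x) (h₁ x)]
  have := hdiv x
  rw [divergence] at this
  congr 1
  linarith

theorem outflux_ofReal {Q : V × V → ℝ} (hQ : ∀ e, 0 ≤ Q e) (S : Finset V)
    (hs : Summable fun p : V × V => Set.indicator {p : V × V | p.1 ∈ S ∧ p.2 ∉ S} Q p) :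
    outflux (fun a b => ENNReal.ofReal (Q (a, b))) S =
      ENNReal.ofReal (∑' p : V × V, Set.indicator {p : V × V | p.1 ∈ S ∧ p.2 ∉ S} Q p) := by
  rw [ENNReal.ofReal_tsum_of_nonneg (fun _ => Set.indicator_nonneg (fun e _ => hQ e) _) hs,
    ENNReal.tsum_prod', tsum_eq_sum (s := S) fun x hx => ?_]
  · refine Finset.sum_congr rfl fun x hx => tsum_congr fun v => ?_
    by_cases hv : v ∈ S <;> simp [hx, hv]
  · simp [hx]

theorem tendsto_outflux_ofReal {Q : V × V → ℝ} (hQ : ∀ e, 0 ≤ Q e) {Vs : ℕ → Finset V}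
    (hs : ∀ n, Summable fun p : V × V => Set.indicator {p : V × V | p.1 ∈ Vs n ∧ p.2 ∉ Vs n} Q p)
    (hflux : Tendsto (fun n => ∑' p : V × V,
      Set.indicator {p : V × V | p.1 ∈ Vs n ∧ p.2 ∉ Vs n} Q p) atTop (𝓝 0)) :
    Tendsto (fun n => outflux (fun a b => ENNReal.ofReal (Q (a, b))) (Vs n)) atTop (𝓝 0) := by
  have := ENNReal.tendsto_ofReal hflux
  rw [ENNReal.ofReal_zero] at this
  exact this.congr fun n => (outflux_ofReal hQ _ (hs n)).symm

theorem IsFlow.isDipath_of_flowPathMass_ne_zero {E : Set (V × V)} {Q : V × V → ℝ}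
    (hQ : IsFlow E Q) (hacyc : AcyclicRel fun a b => 0 < Q (a, b)) {m₁ m₂ I : V → ℝ≥0∞}
    (hI : ∀ x, I x ≠ ∞) {l : List V}
    (hl : flowPathMass (fun a b => ENNReal.ofReal (Q (a, b))) m₁ m₂ I l ≠ 0) :
    IsDipath E l ∧ l.Nodup := by
  obtain ⟨hne, hchain⟩ := flowPathMass_ne_zero hI hl
  refine ⟨⟨hne, hchain.imp fun a b hab => ?_⟩, (hchain.imp fun a b h => ?_).nodup hacyc⟩
  · by_contra hE
    simp [hQ.2 _ hE] at hab
  · simpa using h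

theorem finDecomposable_of_tsum_ite_mem_pathEdges [Countable V] [Nonempty V] {E : Set (V × V)}
    {Q : V × V → ℝ} (hQ : ∀ e, 0 ≤ Q e) (W : List V → ℝ≥0∞) (hW : ∑' l, W l ≠ ∞)
    (hpath : ∀ l, W l ≠ 0 → IsDipath E l ∧ l.Nodup)
    (hedge : ∀ e, ∑' l, (if e ∈ pathEdges l then W l else 0) = ENNReal.ofReal (Q e)) :
    FinDecomposable E Q := by
  obtain ⟨v₀⟩ := ‹Nonempty V›
  obtain ⟨σ⟩ := nonempty_equiv_of_countable (α := List V) (β := ℕ)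
  have hWfin : ∀ l, W l ≠ ∞ := fun l => ne_top_of_le_ne_top hW (ENNReal.le_tsum l)
  refine ⟨fun n => if W (σ.symm n) = 0 then [v₀] else σ.symm n, fun n => (W (σ.symm n)).toReal,
    fun n => ?_, fun n => ?_, fun n => ENNReal.toReal_nonneg,
    σ.symm.summable_iff.2 (ENNReal.summable_toReal hW), fun e => ?_⟩
  · dsimp only
    split_ifs with h
    · exact ⟨List.cons_ne_nil v₀ [], List.isChain_singleton v₀⟩
    · exact (hpath _ h).1
  · dsimp only
    split_ifs with h
    · exact List.nodup_singleton v₀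
    · exact (hpath _ h).2
  · rw [← ENNReal.toReal_ofReal (hQ e), ← hedge, ENNReal.tsum_toReal_eq fun l => by
      split_ifs <;> simp [hWfin], ← σ.symm.tsum_eq]
    refine tsum_congr fun n => ?_
    by_cases h0 : W (σ.symm n) = 0
    · simp [h0]
    · by_cases hmem : e ∈ pathEdges (σ.symm n) <;> simp [h0, hmem, pathFlow]

end RealFlows

theorem zero_flux_finitely_decomposable_general {V : Type*} [Countable V]
    (E : Set (V × V))
    (Q : V × V → ℝ) (hQ : IsFlow E Q)
    (hacyc : AcyclicRel fun a b => 0 < Q (a, b))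
    (μ₁ μ₂ : V → ℝ) (h₁ : IsProb μ₁) (h₂ : IsProb μ₂)
    (hout : ∀ x, Summable fun y => Q (x, y)) (hin : ∀ x, Summable fun y => Q (y, x))
    (hdiv : ∀ x, divergence Q x = μ₁ x - μ₂ x)
    (Vs : ℕ → Finset V) (hVmono : ∀ n, Vs n ⊆ Vs (n + 1)) (hVcover : ∀ x : V, ∃ n, x ∈ Vs n)
    (hfluxsum : ∀ n, Summable fun p : V × V =>
      Set.indicator {p : V × V | p.1 ∈ Vs n ∧ p.2 ∉ Vs n} Q p)
    (hflux : Filter.Tendsto (fun n => ∑' p : V × V,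
        Set.indicator {p : V × V | p.1 ∈ Vs n ∧ p.2 ∉ Vs n} Q p)
      Filter.atTop (nhds 0)) :
    FinDecomposable E Q := by
  have := h₁.nonempty
  set q : V → V → ℝ≥0∞ := fun a b => ENNReal.ofReal (Q (a, b))
  set m₁ : V → ℝ≥0∞ := fun x => ENNReal.ofReal (μ₁ x)
  set m₂ : V → ℝ≥0∞ := fun x => ENNReal.ofReal (μ₂ x)
  set I : V → ℝ≥0∞ := fun x => ENNReal.ofReal (∑' z, Q (x, z) + μ₂ x)
  have hI : ∀ x, I x ≠ ∞ := fun _ => ENNReal.ofReal_ne_top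
  have hqout := fun x => tsum_ofReal_add_ofReal (fun _ => hQ.1 _) (hout x) (h₂.1 x)
  have hqin := tsum_ofReal_add_ofReal_of_divergence hQ.1 h₁.1 hin hdiv
  have hqacyc : AcyclicRel fun a b => q a b ≠ 0 := hacyc.mono fun a b h => by simpa [q] using h
  have hVs : Monotone Vs := monotone_nat_of_le_succ hVmono
  have hqflux := tendsto_outflux_ofReal hQ.1 hfluxsum hflux
  have hmass := h₁.tsum_ofReal
  refine finDecomposable_of_tsum_ite_mem_pathEdges hQ.1 (flowPathMass q m₁ m₂ I) ?_
    (fun l hl => hQ.isDipath_of_flowPathMass_ne_zero hacyc hI hl) fun ⟨a, b⟩ => ?_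
  · rw [tsum_flowPathMass hI hqout hqin hqacyc hVs hVcover hqflux, hmass]
    exact ENNReal.one_ne_top
  · exact tsum_ite_mem_pathEdges_flowPathMass hI hqout hqin hqacyc
      (hmass.trans h₂.tsum_ofReal.symm) (hmass ▸ ENNReal.one_ne_top) hVs hVcover hqflux a b

/-- **Zero flux towards infinity implies finite decomposability.**
An acyclic flow `Q` on an infinite countable digraph with `div Q = μ₁ - μ₂` and zero flux
towards infinity is finitely decomposable. -/
theorem zero_flux_finitely_decomposable {V : Type*} [Countable V] [Infinite V]
    (E : Set (V × V)) (hloop : ∀ x : V, (x, x) ∉ E)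
    (Q : V × V → ℝ) (hQ : IsFlow E Q)
    (hacyc : AcyclicRel fun a b => 0 < Q (a, b))
    (μ₁ μ₂ : V → ℝ) (h₁ : IsProb μ₁) (h₂ : IsProb μ₂)
    (hout : ∀ x, Summable fun y => Q (x, y)) (hin : ∀ x, Summable fun y => Q (y, x))
    (hdiv : ∀ x, divergence Q x = μ₁ x - μ₂ x)
    (Vs : ℕ → Finset V) (hVmono : ∀ n, Vs n ⊆ Vs (n + 1)) (hVcover : ∀ x : V, ∃ n, x ∈ Vs n)
    (hfluxsum : ∀ n, Summable fun p : V × V =>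
      Set.indicator {p : V × V | p.1 ∈ Vs n ∧ p.2 ∉ Vs n} Q p)
    (hflux : Filter.Tendsto (fun n => ∑' p : V × V,
        Set.indicator {p : V × V | p.1 ∈ Vs n ∧ p.2 ∉ Vs n} Q p)
      Filter.atTop (nhds 0)) :
    FinDecomposable E Q :=
  zero_flux_finitely_decomposable_general E Q hQ hacyc μ₁ μ₂ h₁ h₂ hout hin hdiv Vs hVmono hVcover
    hfluxsum hflux
end

section
/- Let Q be a flow on an infinite digraph (V,E) with countable vertex set. If there exists an invading sequence of vertices {V_n} such that sup{ Q(x,y) : (x,y) ∈ E, {x,y} ∩ (V \ V_n) ≠ ∅ } does not converge to 0 as n → ∞, then Q is not finitely decomposable. -/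
/-!
Write `Q = ∑ₙ qₙ Q_{γₙ}`. Given `δ > 0`, pick `N` with `∑_{n ≥ N} qₙ < δ`. The finitely many
vertices of `γ₀, …, γ_{N-1}` all lie in `Vₙ` for `n` large, and then an edge touching `V \ Vₙ`
lies on none of these paths, so `Q` is at most `∑_{n ≥ N} qₙ < δ` on it.
-/

open scoped BigOperators

variable {V : Type*}

open Filter Topology

lemma pathFlow_nonneg (l : List V) (e : V × V) : 0 ≤ pathFlow l e :=
  Set.indicator_nonneg (fun _ _ => zero_le_one) e

lemma pathFlow_le_one (l : List V) (e : V × V) : pathFlow l e ≤ 1 :=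
  Set.indicator_apply_le' (fun _ => le_rfl) (fun _ => zero_le_one)

lemma mem_of_mem_pathEdges {l : List V} {e : V × V} (h : e ∈ pathEdges l) :
    e.1 ∈ l ∧ e.2 ∈ l :=
  have h' := List.of_mem_zip (show (e.1, e.2) ∈ l.zip l.tail from h)
  ⟨h'.1, List.mem_of_mem_tail h'.2⟩

lemma pathFlow_eq_zero_of_not_mem {l : List V} {e : V × V} (h : e.1 ∉ l ∨ e.2 ∉ l) :
    pathFlow l e = 0 :=
  Set.indicator_of_notMem (fun he => by
    obtain ⟨h1, h2⟩ := mem_of_mem_pathEdges he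
    exact h.elim (· h1) (· h2)) _

lemma tsum_mul_le_tsum_nat_add {q f : ℕ → ℝ} (hq0 : ∀ k, 0 ≤ q k) (hq : Summable q)
    (hf0 : ∀ k, 0 ≤ f k) (hf1 : ∀ k, f k ≤ 1) {N : ℕ} (hfN : ∀ k < N, f k = 0) :
    ∑' k, q k * f k ≤ ∑' k, q (k + N) := by
  have hle : ∀ k, q k * f k ≤ q k := fun k => mul_le_of_le_one_right (hq0 k) (hf1 k)
  have hqf : Summable fun k => q k * f k :=
    hq.of_nonneg_of_le (fun k => mul_nonneg (hq0 k) (hf0 k)) hle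
  have hhead : ∑ k ∈ Finset.range N, q k * f k = 0 :=
    Finset.sum_eq_zero fun k hk => by rw [hfN k (Finset.mem_range.1 hk), mul_zero]
  rw [← hqf.sum_add_tsum_nat_add N, hhead, zero_add]
  exact Summable.tsum_le_tsum (fun k => hle _) ((summable_nat_add_iff N).2 hqf)
    ((summable_nat_add_iff N).2 hq)

lemma eventually_subset_of_monotone {Vs : ℕ → Finset V} (hmono : Monotone Vs)
    (hcover : ∀ x, ∃ n, x ∈ Vs n) (S : Finset V) : ∀ᶠ n in atTop, S ⊆ Vs n := by
  refine ((eventually_all_finset S).2 fun x _ => ?_).mono fun n hn x hx => hn x hx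
  obtain ⟨m, hm⟩ := hcover x
  exact eventually_atTop.2 ⟨m, fun n hn => hmono hn hm⟩

lemma tendsto_iSup_edges_leaving_of_eq_tsum_pathFlow (E : Set (V × V)) {Q : V × V → ℝ}
    {γ : ℕ → List V} {q : ℕ → ℝ} (hq0 : ∀ n, 0 ≤ q n) (hq : Summable q)
    (hQ : ∀ e, Q e = ∑' n, q n * pathFlow (γ n) e)
    {Vs : ℕ → Finset V} (hmono : Monotone Vs) (hcover : ∀ x, ∃ n, x ∈ Vs n) :
    Tendsto (fun n =>
        ⨆ (e : V × V) (_ : e ∈ E ∧ (e.1 ∉ Vs n ∨ e.2 ∉ Vs n)), ENNReal.ofReal (Q e))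
      atTop (𝓝 0) := by
  classical
  set tail : ℕ → ENNReal := fun N => ENNReal.ofReal (∑' k, q (k + N))
  have htail : Tendsto tail atTop (𝓝 0) := by
    simpa [tail] using ENNReal.tendsto_ofReal (tendsto_sum_nat_add q)
  have hbound : ∀ N, ∀ᶠ n in atTop,
      ⨆ (e : V × V) (_ : e ∈ E ∧ (e.1 ∉ Vs n ∨ e.2 ∉ Vs n)), ENNReal.ofReal (Q e) ≤ tail N := by
    intro N
    let S : Finset V := (Finset.range N).biUnion fun k => (γ k).toFinset
    filter_upwards [eventually_subset_of_monotone hmono hcover S] with n hS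
    refine iSup₂_le fun e he => ENNReal.ofReal_le_ofReal ?_
    have hpaths : ∀ k < N, ∀ x ∈ γ k, x ∈ Vs n := fun k hk x hx =>
      hS <| Finset.mem_biUnion.2 ⟨k, Finset.mem_range.2 hk, List.mem_toFinset.2 hx⟩
    have hoff : ∀ k < N, pathFlow (γ k) e = 0 := fun k hk =>
      pathFlow_eq_zero_of_not_mem <| he.2.imp
        (fun h h1 => h (hpaths k hk _ h1)) (fun h h2 => h (hpaths k hk _ h2))
    rw [hQ e]
    exact tsum_mul_le_tsum_nat_add hq0 hq (fun _ => pathFlow_nonneg _ _)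
      (fun _ => pathFlow_le_one _ _) hoff
  refine ENNReal.tendsto_atTop_zero.2 fun ε hε => ?_
  obtain ⟨N, hN⟩ := (htail.eventually_le_const hε).exists
  obtain ⟨n₀, hn₀⟩ := eventually_atTop.1 (hbound N)
  exact ⟨n₀, fun n hn => (hn₀ n hn).trans hN⟩

theorem not_finitely_decomposable_general {V : Type*}
    (E : Set (V × V))
    (Q : V × V → ℝ)
    (Vs : ℕ → Finset V) (hVmono : ∀ n, Vs n ⊆ Vs (n + 1)) (hVcover : ∀ x : V, ∃ n, x ∈ Vs n)
    (hsup : ¬ Filter.Tendsto (fun n =>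
        ⨆ (e : V × V) (_ : e ∈ E ∧ (e.1 ∉ Vs n ∨ e.2 ∉ Vs n)), ENNReal.ofReal (Q e))
      Filter.atTop (nhds 0)) :
    ¬ FinDecomposable E Q := by
  rintro ⟨γ, q, -, -, hq0, hq, hQ⟩
  exact hsup <| tendsto_iSup_edges_leaving_of_eq_tsum_pathFlow E hq0 hq hQ
    (monotone_nat_of_le_succ hVmono) hVcover

/-- **A necessary condition for finite decomposability.**
If along some invading sequence `Vₙ` the supremum of `Q` over edges touching the complement
of `Vₙ` does not tend to `0`, then the flow `Q` is not finitely decomposable. -/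
theorem not_finitely_decomposable {V : Type*} [Countable V] [Infinite V]
    (E : Set (V × V)) (hloop : ∀ x : V, (x, x) ∉ E)
    (Q : V × V → ℝ) (hQ : IsFlow E Q)
    (Vs : ℕ → Finset V) (hVmono : ∀ n, Vs n ⊆ Vs (n + 1)) (hVcover : ∀ x : V, ∃ n, x ∈ Vs n)
    (hsup : ¬ Filter.Tendsto (fun n =>
        ⨆ (e : V × V) (_ : e ∈ E ∧ (e.1 ∉ Vs n ∨ e.2 ∉ Vs n)), ENNReal.ofReal (Q e))
      Filter.atTop (nhds 0)) :
    ¬ FinDecomposable E Q :=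
  not_finitely_decomposable_general E Q Vs hVmono hVcover hsup
end
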